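/- arXiv:1203.2823 — 6 statements merged into one kernel-verified Lean document; each statement's English description precedes it below -/
import Mathlib

section
/- Let m be an integer and p an odd prime dividing m−4. Then for every positive integer n, p^{ν_p(n)} divides ∑_{k=0}^{n-1} C(2k,k)/m^k, i.e., the p-adic valuation of ∑_{k=0}^{n-1} C(2k,k)·m^{n-1-k} is at least ν_p(n) (equivalently, ν_p of the rational sum ∑_{k=0}^{n-1} C(2k,k)/m^k is ≥ ν_p(n)). -/
/-!
Expand `P_n(X) = ∑_{k<n} C(2k,k) X^(n-1-k)` around `X = 4`. By the Horner recursion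
`P_{n+1} = X P_n + C(2n,n)`, its Taylor coefficients `a_j` satisfy
`(2j+1) C(2j,j) a_j = (2n-1) C(2n-2,n-1) C(n-1,j)`, and `n ∣ (2n-1) C(2n-2,n-1)`.
For odd `p`, `ν_p((2j+1) C(2j,j)) ≤ ν_p((2j+1)!) ≤ j` by Legendre's formula, so
`p^(ν_p(n) - j) ∣ a_j`, while `p^j ∣ (m-4)^j`; hence `p^ν_p(n)` divides every term of
`P_n(m) = ∑_j a_j (m-4)^j`.
-/

open Polynomial Nat

noncomputable def centralBinomHorner : ℕ → ℤ[X]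
  | 0 => 0
  | n + 1 => X * centralBinomHorner n + C (centralBinom n : ℤ)

theorem eval_centralBinomHorner (m : ℤ) (n : ℕ) :
    (centralBinomHorner n).eval m =
      ∑ k ∈ Finset.range n, (centralBinom k : ℤ) * m ^ (n - 1 - k) := by
  induction n with
  | zero => simp [centralBinomHorner]
  | succ n ih =>
    rw [centralBinomHorner, Finset.sum_range_succ, eval_add, eval_mul, eval_X, eval_C, ih,
      Finset.mul_sum]
    congr 1
    · refine Finset.sum_congr rfl fun k hk => ?_
      rw [show n + 1 - 1 - k = n - 1 - k + 1 by grind, pow_succ]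
      ring
    · simp

theorem taylor_centralBinomHorner_succ (n : ℕ) :
    taylor 4 (centralBinomHorner (n + 1)) =
      (X + C 4) * taylor 4 (centralBinomHorner n) + C (centralBinom n : ℤ) := by
  rw [centralBinomHorner, map_add, taylor_mul, taylor_X, taylor_C]

theorem mul_taylor_coeff_centralBinomHorner (n j : ℕ) :
    ((2 * j + 1) * centralBinom j : ℤ) * (taylor 4 (centralBinomHorner (n + 1))).coeff j =
      (2 * n + 1) * centralBinom n * n.choose j := by
  induction n generalizing j with
  | zero => cases j <;> simp [centralBinomHorner, coeff_one]
  | succ n ih =>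
    have hcb (i : ℕ) :
        ((i + 1) * centralBinom (i + 1) : ℤ) = 2 * (2 * i + 1) * centralBinom i := by
      exact_mod_cast succ_mul_centralBinom_succ i
    set t := (taylor 4 (centralBinomHorner (n + 1))).coeff
    rw [taylor_centralBinomHorner_succ]
    cases j with
    | zero =>
      have h0 := ih 0
      simp only [coeff_add, coeff_C_zero, mul_coeff_zero, coeff_X_zero, centralBinom_zero,
        choose_zero_right] at h0 ⊢
      push_cast at h0 ⊢
      linear_combination 4 * h0 - 2 * hcb n
    | succ j =>
      have hpascal : ((j + 1) * (n + 1).choose (j + 1) : ℤ) = (n + 1) * n.choose j := by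
        rw [mul_comm]
        exact_mod_cast (add_one_mul_choose_eq n j).symm
      have hsucc : ((n + 1).choose (j + 1) : ℤ) = n.choose j + n.choose (j + 1) := by
        exact_mod_cast choose_succ_succ' n j
      have habs : ((j + 1) * n.choose (j + 1) : ℤ) = (n - j) * n.choose j := by
        linear_combination hpascal - (j + 1) * hsucc
      have ih' := ih (j + 1)
      push_cast at ih'
      simp only [coeff_add, add_mul, coeff_X_mul, coeff_C_mul, coeff_C_succ, add_zero]
      -- scaling by `j + 1` lets `hcb j` relate `(2j+3) C(2j+2,j+1)` to `(2j+1) C(2j,j)`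
      apply mul_left_cancel₀ (show ((j : ℤ) + 1) ≠ 0 by positivity)
      push_cast
      linear_combination (2 * j + 3) * t j * hcb j + 2 * (2 * j + 3) * ih j + 4 * (j + 1) * ih'
        - (2 * n + 3) * centralBinom (n + 1) * hpascal - (2 * n + 3) * n.choose j * hcb n
        + 4 * (2 * n + 1) * centralBinom n * habs

theorem two_mul_add_one_mul_centralBinom_dvd_factorial (j : ℕ) :
    (2 * j + 1) * centralBinom j ∣ (2 * j + 1)! := by
  rw [factorial_succ]
  refine mul_dvd_mul_left _ (Dvd.intro (j ! * j !) ?_)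
  have := choose_mul_factorial_mul_factorial (le_add_right j j)
  rwa [add_tsub_cancel_right, ← two_mul, mul_assoc] at this

theorem padicValNat_two_mul_add_one_mul_centralBinom_le {p : ℕ} [hp : Fact p.Prime]
    (hp2 : p ≠ 2) (j : ℕ) : padicValNat p ((2 * j + 1) * centralBinom j) ≤ j := by
  have hfac : padicValNat p ((2 * j + 1) * centralBinom j) ≤ padicValNat p (2 * j + 1)! := by
    rw [← padicValNat_dvd_iff_le (factorial_ne_zero _)]
    exact pow_padicValNat_dvd.trans (two_mul_add_one_mul_centralBinom_dvd_factorial j)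
  have hlegendre :=
    sub_one_mul_padicValNat_factorial_lt_of_ne_zero p (n := 2 * j + 1) (succ_ne_zero _)
  have hp3 : 2 ≤ p - 1 := by have := hp.out.two_le; omega
  have := Nat.mul_le_mul_right (padicValNat p (2 * j + 1)!) hp3
  omega

theorem Int.pow_sub_dvd_of_pow_dvd_natCast_mul {p : ℕ} [Fact p.Prime] {b : ℕ} {a : ℤ}
    {v j : ℕ} (hb : b ≠ 0) (hbj : padicValNat p b ≤ j) (h : (p : ℤ) ^ v ∣ b * a) :
    (p : ℤ) ^ (v - j) ∣ a := by
  rcases eq_or_ne a 0 with rfl | ha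
  · exact dvd_zero _
  have hba : (b : ℤ) * a ≠ 0 := mul_ne_zero (by exact_mod_cast hb) ha
  rw [padicValInt_dvd_iff, or_iff_right hba, padicValInt.mul (by exact_mod_cast hb) ha,
    padicValInt.of_nat] at h
  rw [padicValInt_dvd_iff]
  right
  omega

theorem pow_sub_dvd_taylor_coeff_centralBinomHorner {p : ℕ} [Fact p.Prime] (hp2 : p ≠ 2)
    (n j : ℕ) : (p : ℤ) ^ (padicValNat p (n + 1) - j) ∣
      (taylor 4 (centralBinomHorner (n + 1))).coeff j := by
  refine Int.pow_sub_dvd_of_pow_dvd_natCast_mul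
    (mul_pos (by omega) (centralBinom_pos j)).ne'
    (padicValNat_two_mul_add_one_mul_centralBinom_le hp2 j) ?_
  have hdvd : n + 1 ∣ (2 * n + 1) * centralBinom n * n.choose j :=
    ((succ_dvd_centralBinom n).mul_left _).mul_right _
  push_cast
  rw [mul_taylor_coeff_centralBinomHorner]
  exact_mod_cast pow_padicValNat_dvd.trans hdvd

theorem stmt_1_general (p : ℕ) (hp : p.Prime) (hodd : Odd p) (m : ℤ) (hpm : (p : ℤ) ∣ m - 4)
    (n : ℕ) :
    (p : ℤ) ^ (padicValNat p n) ∣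
      ∑ k ∈ Finset.range n, (Nat.choose (2 * k) k : ℤ) * m ^ (n - 1 - k) := by
  have := Fact.mk hp
  rcases n with _ | n
  · simp
  have hp2 : p ≠ 2 := by
    rintro rfl
    exact absurd hodd (by decide)
  simp only [← centralBinom_eq_two_mul_choose]
  rw [← eval_centralBinomHorner, ← sub_add_cancel m 4, ← taylor_eval, eval_eq_sum_range]
  refine Finset.dvd_sum fun j _ => ?_
  calc (p : ℤ) ^ padicValNat p (n + 1) ∣ (p : ℤ) ^ (padicValNat p (n + 1) - j + j) :=
        pow_dvd_pow _ (by omega)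
    _ ∣ _ := by
      rw [pow_add]
      exact mul_dvd_mul (pow_sub_dvd_taylor_coeff_centralBinomHorner hp2 n j)
        (pow_dvd_pow_of_dvd hpm j)

theorem stmt_1 (p : ℕ) (hp : p.Prime) (hodd : Odd p) (m : ℤ) (hpm : (p : ℤ) ∣ m - 4)
    (n : ℕ) (hn : 0 < n) :
    (p : ℤ) ^ (padicValNat p n) ∣
      ∑ k ∈ Finset.range n, (Nat.choose (2 * k) k : ℤ) * m ^ (n - 1 - k) :=
  stmt_1_general p hp hodd m hpm n
end

section
/- Let m be an integer and p an odd prime dividing m−4. Then for every positive integer n, the p-adic valuation of ∑_{k=0}^{n-1} (−1)^k·C(2k,k)·C(n−1,k)/m^k is at least ν_p(n). -/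
/-!
Writing `m = (m - 4) + 4` and using the classical identity
`∑ₖ (-1)ᵏ C(2k,k) C(N,k) 4^(N-k) = C(2N,N)` turns the sum (with `N = n - 1`) into
`∑ⱼ C(N,j) C(2(N-j),N-j) (m-4)ʲ`. The term with index `j` is divisible by `p^j`, and when
`j < ν_p(n)` the missing power comes from the central binomial coefficient: since
`N - j ≡ -(j+1) (mod p^ν_p(n))`, Kummer's theorem finds a carry in `(N-j) + (N-j)` at every
base-`p` position above the number of digits of `j + 1`.
-/

open Finset Nat

theorem succ_mul_succ_choose (N k : ℕ) :
    (N + 1) * (N + 1).choose k = (N + k + 1) * N.choose k + k * N.choose (k - 1) := by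
  cases k with
  | zero => simp
  | succ j =>
    have hpascal := Nat.choose_succ_succ' N j
    have habsorb := Nat.add_one_mul_choose_eq N j
    rw [Nat.add_sub_cancel]
    nlinarith

theorem succ_mul_sum_centralBinom_choose_four_pow (N : ℕ) :
    (N + 1) * ∑ k ∈ range (N + 2),
        (-1 : ℤ) ^ k * centralBinom k * (N + 1).choose k * 4 ^ (N + 1 - k) =
      2 * (2 * N + 1) * ∑ k ∈ range (N + 1),
        (-1 : ℤ) ^ k * centralBinom k * N.choose k * 4 ^ (N - k) := by
  -- A Zeilberger certificate: the recurrence holds termwise up to the telescoping `G`.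
  set G : ℕ → ℤ := fun j =>
    (-1) ^ (j + 1) * j * centralBinom j * N.choose (j - 1) * 4 ^ (N + 1 - j)
  have hterm : ∀ k ∈ range (N + 1),
      (N + 1) * ((-1 : ℤ) ^ k * centralBinom k * (N + 1).choose k * 4 ^ (N + 1 - k)) -
        2 * (2 * N + 1) * ((-1 : ℤ) ^ k * centralBinom k * N.choose k * 4 ^ (N - k)) =
      G (k + 1) - G k := by
    intro k hk
    have hpascal : ((N + 1 : ℕ) : ℤ) * (N + 1).choose k =
        (N + k + 1 : ℕ) * N.choose k + k * N.choose (k - 1) := mod_cast succ_mul_succ_choose N k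
    have hcentral :
        ((k + 1 : ℕ) : ℤ) * centralBinom (k + 1) = 2 * (2 * k + 1) * centralBinom k :=
      mod_cast succ_mul_centralBinom_succ k
    simp only [G, Nat.add_sub_cancel, show N + 1 - (k + 1) = N - k by omega]
    rw [show N + 1 - k = N - k + 1 by grind]
    push_cast at hpascal hcentral ⊢
    linear_combination (-1 : ℤ) ^ k * 4 ^ (N - k) *
      (4 * centralBinom k * hpascal - N.choose k * hcentral)
  have htelescope := sum_range_sub G (N + 1)
  rw [← sum_congr rfl hterm, sum_sub_distrib, ← mul_sum, ← mul_sum] at htelescope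
  simp only [G, Nat.sub_self, Nat.add_sub_cancel, Nat.choose_self, CharP.cast_eq_zero,
    mul_zero, zero_mul, sub_zero] at htelescope
  rw [sum_range_succ]
  simp only [Nat.choose_self, Nat.sub_self]
  push_cast at htelescope ⊢
  linear_combination htelescope

theorem sum_centralBinom_choose_four_pow (N : ℕ) :
    ∑ k ∈ range (N + 1), (-1 : ℤ) ^ k * centralBinom k * N.choose k * 4 ^ (N - k) =
      centralBinom N := by
  induction N with
  | zero => simp
  | succ N ih =>
    refine mul_left_cancel₀ (N.cast_add_one_ne_zero (R := ℤ)) ?_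
    rw [succ_mul_sum_centralBinom_choose_four_pow, ih]
    exact_mod_cast (succ_mul_centralBinom_succ N).symm

theorem choose_mul_choose_sub_comm (N k j : ℕ) :
    N.choose k * (N - k).choose j = N.choose j * (N - j).choose k := by
  have hk := Nat.choose_mul (n := N) (Nat.le_add_right k j)
  have hj := Nat.choose_mul (n := N) (Nat.le_add_left j k)
  rw [Nat.add_sub_cancel_left] at hk
  rw [Nat.add_sub_cancel] at hj
  rw [← hk, ← hj, Nat.choose_symm_add]

theorem sum_centralBinom_choose_pow_eq {R : Type*} [CommRing R] (N : ℕ) (x : R) :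
    ∑ k ∈ range (N + 1), (-1) ^ k * centralBinom k * N.choose k * x ^ (N - k) =
      ∑ j ∈ range (N + 1), N.choose j * centralBinom (N - j) * (x - 4) ^ j := by
  have hcentral (M : ℕ) : ∑ k ∈ range (M + 1),
      (-1 : R) ^ k * centralBinom k * M.choose k * 4 ^ (M - k) = centralBinom M := by
    exact_mod_cast congrArg (Int.cast : ℤ → R) (sum_centralBinom_choose_four_pow M)
  calc _ = ∑ k ∈ range (N + 1), ∑ j ∈ range (N - k + 1),
        (-1) ^ k * centralBinom k * N.choose k *
          ((x - 4) ^ j * 4 ^ (N - k - j) * (N - k).choose j) := by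
        refine sum_congr rfl fun k _ => ?_
        rw [← mul_sum, ← add_pow, sub_add_cancel]
    _ = ∑ j ∈ range (N + 1), ∑ k ∈ range (N - j + 1),
        (-1) ^ k * centralBinom k * N.choose k *
          ((x - 4) ^ j * 4 ^ (N - k - j) * (N - k).choose j) :=
        sum_comm' fun k j => by simp only [mem_range]; omega
    _ = ∑ j ∈ range (N + 1), N.choose j * (x - 4) ^ j * ∑ k ∈ range (N - j + 1),
        (-1 : R) ^ k * centralBinom k * (N - j).choose k * 4 ^ (N - j - k) := by
        refine sum_congr rfl fun j _ => ?_
        rw [mul_sum]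
        refine sum_congr rfl fun k _ => ?_
        have hswap : (N.choose k : R) * (N - k).choose j = N.choose j * (N - j).choose k :=
          mod_cast congrArg (Nat.cast : ℕ → R) (choose_mul_choose_sub_comm N k j)
        rw [Nat.sub_right_comm]
        linear_combination (-1) ^ k * centralBinom k * (x - 4) ^ j * 4 ^ (N - j - k) * hswap
    _ = _ := by simp only [hcentral]; ring_nf

theorem le_mod_add_mod_of_dvd_add {q M r : ℕ} (hr : 0 < r) (hrq : 2 * r ≤ q)
    (hdvd : q ∣ M + r) : q ≤ M % q + M % q := by
  obtain ⟨t, ht⟩ := hdvd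
  cases t with
  | zero => omega
  | succ t =>
    have hM : M = q * t + (q - r) := by rw [Nat.mul_succ] at ht; omega
    rw [hM, Nat.mul_add_mod, Nat.mod_eq_of_lt (by omega)]
    omega

theorem pow_dvd_centralBinom_of_dvd_add {p : ℕ} [hp : Fact p.Prime] {M r ℓ v : ℕ} (hr : 0 < r)
    (hrℓ : r ≤ p ^ ℓ) (hdvd : p ^ v ∣ M + r) : p ^ (v - ℓ) ∣ centralBinom M := by
  rw [padicValNat_dvd_iff_le (centralBinom_ne_zero M), centralBinom_eq_two_mul_choose, two_mul,
    padicValNat_choose' (Nat.lt_succ_of_le (le_max_left _ (v + 1)))]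
  calc v - ℓ = #(Ico (ℓ + 1) (v + 1)) := by simp
    _ ≤ _ := card_le_card fun i hi => by
      obtain ⟨hℓi, hiv⟩ := mem_Ico.mp hi
      refine mem_filter.mpr ⟨mem_Ico.mpr ⟨by omega, by omega⟩, ?_⟩
      refine le_mod_add_mod_of_dvd_add hr ?_ ((pow_dvd_pow p (by omega)).trans hdvd)
      calc 2 * r ≤ p * p ^ ℓ := Nat.mul_le_mul hp.out.two_le hrℓ
        _ = p ^ (ℓ + 1) := (pow_succ' p ℓ).symm
        _ ≤ p ^ i := Nat.pow_le_pow_right hp.out.pos hℓi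

theorem pow_dvd_centralBinom_mul_pow {p : ℕ} [hp : Fact p.Prime] {a : ℤ} (ha : (p : ℤ) ∣ a)
    {M j v : ℕ} (hdvd : p ^ v ∣ M + (j + 1)) : (p : ℤ) ^ v ∣ centralBinom M * a ^ j := by
  rcases le_or_gt v j with hvj | hjv
  · exact dvd_mul_of_dvd_right ((pow_dvd_pow_of_dvd ha v).trans (pow_dvd_pow a hvj)) _
  set ℓ := Nat.clog p (j + 1)
  have hℓj : ℓ ≤ j := Nat.clog_le_of_le_pow (Nat.lt_pow_self hp.out.one_lt)
  have hcentral : p ^ (v - ℓ) ∣ centralBinom M :=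
    pow_dvd_centralBinom_of_dvd_add j.succ_pos (Nat.le_pow_clog hp.out.one_lt _) hdvd
  calc (p : ℤ) ^ v = p ^ (v - ℓ) * p ^ ℓ := by rw [← pow_add, Nat.sub_add_cancel (by omega)]
    _ ∣ centralBinom M * a ^ j := mul_dvd_mul (mod_cast hcentral)
      ((pow_dvd_pow_of_dvd ha ℓ).trans (pow_dvd_pow a hℓj))

theorem stmt_2_general (p : ℕ) (hp : p.Prime) (m : ℤ) (hpm : (p : ℤ) ∣ m - 4)
    (n : ℕ) :
    (p : ℤ) ^ (padicValNat p n) ∣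
      ∑ k ∈ Finset.range n,
        (-1) ^ k * (Nat.choose (2 * k) k : ℤ) * (Nat.choose (n - 1) k : ℤ) * m ^ (n - 1 - k) := by
  have := Fact.mk hp
  rcases n with _ | N
  · simp
  simp only [Nat.add_sub_cancel, ← centralBinom_eq_two_mul_choose]
  rw [sum_centralBinom_choose_pow_eq]
  refine dvd_sum fun j hj => ?_
  have hN : N - j + (j + 1) = N + 1 := by grind
  rw [mul_assoc]
  exact dvd_mul_of_dvd_right (pow_dvd_centralBinom_mul_pow hpm (hN ▸ pow_padicValNat_dvd)) _

theorem stmt_2 (p : ℕ) (hp : p.Prime) (hodd : Odd p) (m : ℤ) (hpm : (p : ℤ) ∣ m - 4)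
    (n : ℕ) (hn : 0 < n) :
    (p : ℤ) ^ (padicValNat p n) ∣
      ∑ k ∈ Finset.range n,
        (-1) ^ k * (Nat.choose (2 * k) k : ℤ) * (Nat.choose (n - 1) k : ℤ) * m ^ (n - 1 - k) :=
  stmt_2_general p hp m hpm n
end

section
/- Let m ≡ 1 (mod 3) be an integer. Then for every positive integer n, the 3-adic valuation of u_n(m−2,1)/n − u_n(−1,1)/n is at least ν₃(m−1) − 1, where u_n(A,1) is the Lucas sequence. -/
/-!
Write `A = m - 2`, so that `A ≡ -1` modulo `3 ^ (e + 1)` whenever `3 ^ (e + 1) ∣ m - 1`. Congruent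
parameters give congruent Lucas sequences, which handles `3 ∤ n`. From `k` to `3k` the tripling
formula `u_{3k} = u_k (v_k ^ 2 - 1)` gains a factor `3`, because `v_k(A) ≡ v_k(-1) ≡ -1 (mod 3)`;
the cross term `u_k(-1) (v_k(A) ^ 2 - v_k(-1) ^ 2)` is divisible by `3 ^ (e + 1)` when `3 ∤ k` and
vanishes when `3 ∣ k`, as `u(-1)` runs through `0, 1, -1, 0, 1, -1, …`. Hence `3 ^ (e + ν₃ n)`
divides `u_n(A) - u_n(-1)`, and dividing by `n` loses exactly `ν₃ n`.
-/

def lucasU (A : ℤ) : ℕ → ℤ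
  | 0 => 0
  | 1 => 1
  | n + 2 => A * lucasU A (n + 1) - lucasU A n

def lucasV (A : ℤ) : ℕ → ℤ
  | 0 => 2
  | 1 => A
  | n + 2 => A * lucasV A (n + 1) - lucasV A n

section Lucas

variable (A : ℤ)

@[simp] lemma lucasU_zero : lucasU A 0 = 0 := rfl

@[simp] lemma lucasU_one : lucasU A 1 = 1 := rfl

lemma lucasU_add_two (n : ℕ) : lucasU A (n + 2) = A * lucasU A (n + 1) - lucasU A n := rfl

@[simp] lemma lucasV_zero : lucasV A 0 = 2 := rfl

@[simp] lemma lucasV_one : lucasV A 1 = A := rfl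

lemma lucasV_add_two (n : ℕ) : lucasV A (n + 2) = A * lucasV A (n + 1) - lucasV A n := rfl

lemma lucasU_add_add_one (m n : ℕ) :
    lucasU A (m + n + 1) = lucasU A (m + 1) * lucasU A (n + 1) - lucasU A m * lucasU A n := by
  induction n using Nat.twoStepInduction with
  | zero => simp
  | one => simp [lucasU_add_two, mul_comm]
  | more n ih₀ ih₁ =>
    rw [show m + (n + 2) + 1 = m + n + 1 + 2 by ring, lucasU_add_two,
      show m + n + 1 + 1 = m + (n + 1) + 1 by ring, ih₁, ih₀, show n + 2 + 1 = n + 1 + 2 by ring,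
      lucasU_add_two A (n + 1), lucasU_add_two A n]
    ring

lemma lucasU_mul_lucasU_add_two_sub_sq (k : ℕ) :
    lucasU A k * lucasU A (k + 2) - lucasU A (k + 1) ^ 2 = -1 := by
  induction k with
  | zero => simp [lucasU_add_two]
  | succ k ih =>
    rw [lucasU_add_two A (k + 1), lucasU_add_two A k] at *
    linear_combination ih

lemma lucasV_add_one (k : ℕ) : lucasV A (k + 1) = lucasU A (k + 2) - lucasU A k := by
  induction k using Nat.twoStepInduction with
  | zero => simp [lucasU_add_two]
  | one => simp [lucasU_add_two, lucasV_add_two]; ring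
  | more k ih₀ ih₁ =>
    rw [lucasV_add_two, ih₀, ih₁, lucasU_add_two A (k + 2), lucasU_add_two A (k + 1),
      lucasU_add_two A k]
    ring

lemma lucasU_three_mul (k : ℕ) : lucasU A (3 * k) = lucasU A k * (lucasV A k ^ 2 - 1) := by
  rcases k with _ | k
  · simp
  have h₁ := lucasU_add_add_one A k k
  have h₂ := lucasU_add_add_one A (k + 1) k
  have h₃ := lucasU_add_add_one A (k + k + 1) (k + 1)
  rw [show k + 1 + k + 1 = k + k + 2 by ring] at h₂
  rw [show 3 * (k + 1) = k + k + 1 + (k + 1) + 1 by ring, h₃, h₂, h₁, lucasV_add_one]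
  linear_combination lucasU A (k + 1) * lucasU_mul_lucasU_add_two_sub_sq A k

variable {A}

lemma lucasU_modEq {B d : ℤ} (h : A ≡ B [ZMOD d]) (n : ℕ) : lucasU A n ≡ lucasU B n [ZMOD d] := by
  induction n using Nat.twoStepInduction with
  | zero => rfl
  | one => rfl
  | more n ih₀ ih₁ => exact (h.mul ih₁).sub ih₀

lemma lucasV_modEq {B d : ℤ} (h : A ≡ B [ZMOD d]) (n : ℕ) : lucasV A n ≡ lucasV B n [ZMOD d] := by
  induction n using Nat.twoStepInduction with
  | zero => rfl
  | one => exact h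
  | more n ih₀ ih₁ => exact (h.mul ih₁).sub ih₀

end Lucas

lemma lucasU_neg_one_three_mul (k : ℕ) : lucasU (-1) (3 * k) = 0 := by
  induction k with
  | zero => rfl
  | succ k ih =>
    rw [show 3 * (k + 1) = 3 * k + 1 + 2 by ring, lucasU_add_two, lucasU_add_two, ih]
    simp

lemma lucasV_neg_one_modEq (n : ℕ) : lucasV (-1) n ≡ -1 [ZMOD 3] := by
  induction n using Nat.twoStepInduction with
  | zero => decide
  | one => rfl
  | more n ih₀ ih₁ =>
    rw [lucasV_add_two]
    exact (((Int.ModEq.refl (-1)).mul ih₁).sub ih₀).trans (by decide)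

lemma three_dvd_lucasV_sq_sub_one {A : ℤ} (hA : A ≡ -1 [ZMOD 3]) (k : ℕ) :
    3 ∣ lucasV A k ^ 2 - 1 := by
  have hv := (lucasV_modEq hA k).trans (lucasV_neg_one_modEq k)
  simpa using (hv.pow 2).symm.dvd

lemma pow_succ_dvd_lucasU_three_mul_sub {A : ℤ} {e k : ℕ} (hA : A ≡ -1 [ZMOD 3 ^ (e + 1)])
    (hk : 3 ^ (e + padicValNat 3 k) ∣ lucasU A k - lucasU (-1) k) :
    3 ^ (e + padicValNat 3 k + 1) ∣ lucasU A (3 * k) - lucasU (-1) (3 * k) := by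
  have hA₃ : A ≡ -1 [ZMOD 3] := hA.of_dvd (dvd_pow_self 3 e.succ_ne_zero)
  rw [lucasU_three_mul, lucasU_three_mul, pow_succ,
    show ∀ a b x y : ℤ, a * (x ^ 2 - 1) - b * (y ^ 2 - 1) =
      (a - b) * (x ^ 2 - 1) + b * ((x - y) * (x + y)) by intros; ring]
  refine dvd_add (mul_dvd_mul hk (three_dvd_lucasV_sq_sub_one hA₃ k)) ?_
  by_cases h₃ : 3 ∣ k
  · obtain ⟨j, rfl⟩ := h₃
    simp [lucasU_neg_one_three_mul]
  · rw [padicValNat.eq_zero_of_not_dvd h₃, add_zero, ← pow_succ]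
    exact dvd_mul_of_dvd_right (dvd_mul_of_dvd_left (lucasV_modEq hA k).symm.dvd _) _

lemma pow_dvd_lucasU_sub_lucasU_neg_one {A : ℤ} {e : ℕ} (hA : A ≡ -1 [ZMOD 3 ^ (e + 1)])
    (n : ℕ) : 3 ^ (e + padicValNat 3 n) ∣ lucasU A n - lucasU (-1) n := by
  induction n using Nat.strong_induction_on with
  | _ n ih =>
  by_cases h₃ : 3 ∣ n
  · obtain ⟨k, rfl⟩ := h₃
    rcases k.eq_zero_or_pos with rfl | hk
    · simp
    rw [padicValNat.mul three_ne_zero hk.ne', padicValNat.self (by norm_num : 1 < 3), add_comm 1,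
      ← add_assoc]
    exact pow_succ_dvd_lucasU_three_mul_sub hA (ih k (by omega))
  · rw [padicValNat.eq_zero_of_not_dvd h₃, add_zero]
    exact (pow_dvd_pow 3 e.le_succ).trans (lucasU_modEq hA n).symm.dvd

lemma Padic.norm_intCast_div_natCast_le {p : ℕ} [Fact p.Prime] {a : ℤ} {n k : ℕ}
    (h : (p : ℤ) ^ (k + padicValNat p n) ∣ a) : ‖(a : ℚ_[p]) / n‖ ≤ (p : ℝ) ^ (-(k : ℤ)) := by
  rcases n.eq_zero_or_pos with rfl | hn
  · simp only [Nat.cast_zero, div_zero, norm_zero]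
    positivity
  have hp : (0 : ℝ) < p := by exact_mod_cast (Fact.out : p.Prime).pos
  have hn' : (n : ℚ_[p]) ≠ 0 := by exact_mod_cast hn.ne'
  rw [norm_div, Padic.norm_eq_zpow_neg_valuation hn', Padic.valuation_natCast,
    div_le_iff₀ (by positivity), ← zpow_add₀ hp.ne']
  calc ‖(a : ℚ_[p])‖ ≤ (p : ℝ) ^ (-((k + padicValNat p n : ℕ) : ℤ)) :=
        (Padic.norm_int_le_pow_iff_dvd a _).mpr h
    _ = _ := by push_cast; ring_nf

theorem stmt_11_general (m : ℤ) (hm : m ≡ 1 [ZMOD 3]) (n : ℕ) (e : ℕ)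
    (he : (e : ℕ∞) ≤ emultiplicity (3 : ℤ) (m - 1)) :
    ‖(lucasU (m - 2) n : ℚ_[3]) / (n : ℚ_[3]) -
        (lucasU (-1) n : ℚ_[3]) / (n : ℚ_[3])‖ ≤ (3 : ℝ) ^ (1 - (e : ℤ)) := by
  have hA : m - 2 ≡ -1 [ZMOD 3 ^ (e - 1 + 1)] := by
    refine (Int.modEq_iff_dvd.mpr ?_).symm
    rw [show m - 2 - -1 = m - 1 by ring]
    rcases e with _ | e
    · simpa using hm.symm.dvd
    · simpa using pow_dvd_of_le_emultiplicity he
  rw [div_sub_div_same, ← Int.cast_sub]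
  calc _ ≤ ((3 : ℕ) : ℝ) ^ (-((e - 1 : ℕ) : ℤ)) :=
        Padic.norm_intCast_div_natCast_le (by exact_mod_cast pow_dvd_lucasU_sub_lucasU_neg_one hA n)
    _ ≤ _ := by
        push_cast
        exact zpow_le_zpow_right₀ (by norm_num) (by omega)

/-- For `m ≡ 1 (mod 3)` and `n ≥ 1`,
`ν₃(u_n(m−2,1)/n − u_n(−1,1)/n) ≥ ν₃(m−1) − 1` (with `ν₃(0) = ∞` for `m = 1`). -/
theorem stmt_11 (m : ℤ) (hm : m ≡ 1 [ZMOD 3]) (n : ℕ) (hn : 0 < n) (e : ℕ)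
    (he : (e : ℕ∞) ≤ emultiplicity (3 : ℤ) (m - 1)) :
    ‖(lucasU (m - 2) n : ℚ_[3]) / (n : ℚ_[3]) -
        (lucasU (-1) n : ℚ_[3]) / (n : ℚ_[3])‖ ≤ (3 : ℝ) ^ (1 - (e : ℤ)) :=
  stmt_11_general m hm n e he
end

section
/- For every positive integer n and every x (in a commutative ring containing 1/4, e.g. ℚ): ∑_{k=0}^{n} C(2k,k)·C(n,k)·(−x)^k = (1/4^n)·∑_{j=0}^{n} C(2j,j)·C(2(n−j), n−j)·(1−4x)^j. Equivalently, as a polynomial identity over ℤ: 4^n·∑_{k=0}^{n} C(2k,k)·C(n,k)·(−x)^k = ∑_{j=0}^{n} C(2j,j)·C(2(n−j),n−j)·(1−4x)^j. -/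
/-!
Up to the factor `(-4) ^ j`, the central binomial coefficient `C(2j, j)` is the generalized
binomial coefficient `C(-1/2, j)`. Expanding `(1 - 4x) ^ j` binomially, the identity reduces to
`∑ⱼ C(2j, j) C(2(n-j), n-j) C(j, k) = 4 ^ (n-k) C(2k, k) C(n, k)`. Since
`C(j, k) C(r, j) = C(r, k) C(r-k, j-k)`, Chu–Vandermonde turns the left side into
`C(-1/2, k) C(-k-1, n-k)` up to powers of `-4`, and `C(-k-1, n-k) = (-1) ^ (n-k) C(n, k)`.
-/

open Finset

namespace Ring

variable {R : Type*} [CommRing R] [BinomialRing R]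

theorem succ_mul_choose_succ (r : R) (k : ℕ) :
    (k + 1 : R) * choose r (k + 1) = (r - k) * choose r k := by
  have h := choose_smul_choose r (Nat.le_add_right k 1)
  rw [Nat.choose_succ_self_right, Nat.add_sub_cancel_left, choose_one_right, nsmul_eq_mul] at h
  push_cast at h
  rw [h, mul_comm]

theorem choose_neg_natCast_succ (k m : ℕ) :
    choose (-(k + 1 : R)) m = (-1) ^ m * (k + m).choose m := by
  rw [choose_neg, Units.smul_def, zsmul_eq_mul, Int.cast_negOnePow_natCast,
    show (k + 1 + m - 1 : R) = ((k + m : ℕ) : R) by push_cast; ring, choose_natCast]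

theorem sum_range_choose_mul_choose_mul_choose (r s : R) {k n : ℕ} (hkn : k ≤ n) :
    ∑ j ∈ range (n + 1), choose r j * choose s (n - j) * (j.choose k : R) =
      choose r k * choose (r - k + s) (n - k) := by
  obtain ⟨m, rfl⟩ := Nat.exists_eq_add_of_le hkn
  rw [add_assoc, sum_range_add, Nat.add_sub_cancel_left, add_choose_eq _ (Commute.all _ _),
    Nat.sum_antidiagonal_eq_sum_range_succ (fun i j ↦ choose (r - k) i * choose s j), mul_sum,
    sum_eq_zero fun j hj ↦ by
      rw [Nat.choose_eq_zero_of_lt (mem_range.mp hj), Nat.cast_zero, mul_zero], zero_add]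
  refine sum_congr rfl fun i _ ↦ ?_
  have h := choose_smul_choose r (Nat.le_add_right k i)
  rw [Nat.add_sub_cancel_left, nsmul_eq_mul] at h
  rw [Nat.add_sub_add_left, ← mul_assoc, ← h]
  ring

end Ring

theorem Nat.cast_centralBinom_eq_neg_four_pow_mul_choose (j : ℕ) :
    (j.centralBinom : ℚ) = (-4) ^ j * Ring.choose (-2⁻¹ : ℚ) j := by
  induction j with
  | zero => simp
  | succ j ih =>
    have hc := Nat.succ_mul_centralBinom_succ j
    have hr := Ring.succ_mul_choose_succ (-2⁻¹ : ℚ) j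
    apply mul_left_cancel₀ (Nat.cast_add_one_ne_zero j)
    have hc' : ((j + 1 : ℕ) : ℚ) * (j + 1).centralBinom = 2 * (2 * j + 1) * j.centralBinom := by
      exact_mod_cast hc
    push_cast at hc' ⊢
    rw [hc', ih, pow_succ]
    linear_combination 4 * (-4 : ℚ) ^ j * hr

theorem Nat.sum_range_centralBinom_mul_centralBinom_mul_choose {n k : ℕ} (hkn : k ≤ n) :
    ∑ j ∈ range (n + 1), j.centralBinom * (n - j).centralBinom * j.choose k =
      4 ^ (n - k) * k.centralBinom * n.choose k := by
  apply Nat.cast_injective (R := ℚ)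
  have hterm : ∀ j ∈ range (n + 1),
      ((j.centralBinom * (n - j).centralBinom * j.choose k : ℕ) : ℚ) =
        (-4) ^ n * (Ring.choose (-2⁻¹ : ℚ) j * Ring.choose (-2⁻¹) (n - j) * j.choose k) := by
    intro j hj
    push_cast
    rw [cast_centralBinom_eq_neg_four_pow_mul_choose, cast_centralBinom_eq_neg_four_pow_mul_choose,
      ← Nat.add_sub_cancel' (mem_range_succ_iff.mp hj), pow_add, Nat.add_sub_cancel_left]
    ring
  rw [Nat.cast_sum, sum_congr rfl hterm, ← mul_sum,
    Ring.sum_range_choose_mul_choose_mul_choose _ _ hkn,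
    show (-2⁻¹ - k + -2⁻¹ : ℚ) = -(k + 1) by ring, Ring.choose_neg_natCast_succ,
    Nat.add_sub_cancel' hkn, Nat.choose_symm hkn]
  push_cast
  rw [cast_centralBinom_eq_neg_four_pow_mul_choose, ← Nat.add_sub_cancel' hkn, pow_add,
    Nat.add_sub_cancel_left, show (4 : ℚ) = -4 * -1 by norm_num, mul_pow]
  ring

theorem add_one_pow_eq_sum_range_choose_mul_pow {R : Type*} [CommSemiring R] (y : R) {j n : ℕ}
    (hjn : j ≤ n) : (y + 1) ^ j = ∑ k ∈ range (n + 1), (j.choose k : R) * y ^ k := by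
  rw [add_pow]
  refine sum_subset (range_subset_range.mpr (by omega)) (fun k _ hk ↦ ?_) |>.trans
    (sum_congr rfl fun k _ ↦ by rw [one_pow, mul_one, mul_comm])
  rw [Nat.choose_eq_zero_of_lt (by simpa using hk), Nat.cast_zero, mul_zero]

theorem stmt_14_general (n : ℕ) (x : ℚ) :
    4 ^ n * ∑ k ∈ Finset.range (n + 1),
        (Nat.choose (2 * k) k : ℚ) * (Nat.choose n k : ℚ) * (-x) ^ k =
      ∑ j ∈ Finset.range (n + 1),
        (Nat.choose (2 * j) j : ℚ) * (Nat.choose (2 * (n - j)) (n - j) : ℚ) *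
          (1 - 4 * x) ^ j := by
  simp only [← Nat.centralBinom_eq_two_mul_choose]
  calc 4 ^ n * ∑ k ∈ range (n + 1), (k.centralBinom : ℚ) * n.choose k * (-x) ^ k
      = ∑ k ∈ range (n + 1),
          ((4 ^ (n - k) * k.centralBinom * n.choose k : ℕ) : ℚ) * (-(4 * x)) ^ k := by
        rw [mul_sum]
        refine sum_congr rfl fun k hk ↦ ?_
        rw [← Nat.add_sub_cancel' (mem_range_succ_iff.mp hk), pow_add,
          Nat.add_sub_cancel_left, neg_mul_eq_mul_neg, mul_pow]
        push_cast
        ring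
    _ = ∑ k ∈ range (n + 1), ∑ j ∈ range (n + 1),
          ((j.centralBinom * (n - j).centralBinom * j.choose k : ℕ) : ℚ) * (-(4 * x)) ^ k := by
        refine sum_congr rfl fun k hk ↦ ?_
        rw [← Nat.sum_range_centralBinom_mul_centralBinom_mul_choose
          (mem_range_succ_iff.mp hk), Nat.cast_sum, sum_mul]
    _ = ∑ j ∈ range (n + 1), (j.centralBinom : ℚ) * (n - j).centralBinom * (1 - 4 * x) ^ j := by
        rw [sum_comm]
        refine sum_congr rfl fun j hj ↦ ?_
        rw [show 1 - 4 * x = -(4 * x) + 1 by ring,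
          add_one_pow_eq_sum_range_choose_mul_pow _ (mem_range_succ_iff.mp hj), mul_sum]
        push_cast
        exact sum_congr rfl fun k _ ↦ by ring

/-- For every `n ≥ 1` and every rational `x`:
`4^n·∑_{k=0}^n C(2k,k)·C(n,k)·(−x)^k = ∑_{j=0}^n C(2j,j)·C(2(n−j),n−j)·(1−4x)^j`. -/
theorem stmt_14 (n : ℕ) (hn : 0 < n) (x : ℚ) :
    4 ^ n * ∑ k ∈ Finset.range (n + 1),
        (Nat.choose (2 * k) k : ℚ) * (Nat.choose n k : ℚ) * (-x) ^ k =
      ∑ j ∈ Finset.range (n + 1),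
        (Nat.choose (2 * j) j : ℚ) * (Nat.choose (2 * (n - j)) (n - j) : ℚ) *
          (1 - 4 * x) ^ j :=
  stmt_14_general n x
end

section
/- The series ∑_{k=0}^{∞} (−3)^k/(2k+1) converges to 0 in the 3-adic numbers ℚ₃ (more precisely, in the completion of the algebraic closure of ℚ₃, since its value equals (1/(2√−3))·log₃((√−3 − 1)/2) and (√−3 − 1)/2 is a primitive cube root of unity). -/
/-!
Take `π` with `π² = -3` in the algebraic closure of `ℚ₃`, and let
`ℓ_M = ∑_{k<M} (-1)^k X^{k+1}/(k+1)` be the truncated series of `log (1 + X)`. The partial sums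
satisfy `2π s_N = ℓ_{2N}(π) - ℓ_{2N}(-π)`. Differentiating shows
`ℓ_M((1 + X)^n - 1) ≡ n ℓ_M(X) mod X^{M+1}`, and all coefficients involved have 3-adic size at
most `M`. As `(1 + π)³ = (1 - π)³ = -8`, this congruence at `π` and at `-π` gives
`|3 (ℓ_M(π) - ℓ_M(-π))| ≤ M |π|^{M+1}`, hence `|s_N| = O(N 3^{-N})`.
-/

open Polynomial Finset

lemma inv_norm_natCast_le (p : ℕ) [Fact p.Prime] {E : Type*} [NormedField E]
    [NormedAlgebra ℚ_[p] E] {n : ℕ} (hn : n ≠ 0) : ‖(n : E)‖⁻¹ ≤ n := by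
  rw [← map_natCast (algebraMap ℚ_[p] E), norm_algebraMap',
    Padic.norm_eq_zpow_neg_valuation (Nat.cast_ne_zero.mpr hn), Padic.valuation_natCast,
    zpow_neg, inv_inv, zpow_natCast]
  exact_mod_cast Nat.le_of_dvd (Nat.pos_of_ne_zero hn) pow_padicValNat_dvd

namespace Polynomial

variable {K : Type*} [Field K]

variable (K) in
noncomputable def logTrunc (M : ℕ) : K[X] :=
  ∑ k ∈ range M, C ((-1) ^ k / (k + 1) : K) * X ^ (k + 1)

lemma derivative_logTrunc [CharZero K] (M : ℕ) :
    derivative (logTrunc K M) = ∑ k ∈ range M, (-X) ^ k := by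
  simp only [logTrunc, derivative_sum, derivative_C_mul_X_pow]
  refine sum_congr rfl fun k _ => ?_
  have : (-1) ^ k / (k + 1) * ((k + 1 : ℕ) : K) = (-1) ^ k := by push_cast; field_simp
  rw [this, Nat.add_sub_cancel, neg_pow (X : K[X]), C_pow, C_neg, C_1]

lemma X_pow_succ_dvd_of_X_pow_dvd_derivative [CharZero K] {p : K[X]} {M : ℕ}
    (h₀ : p.coeff 0 = 0) (h : X ^ M ∣ derivative p) : X ^ (M + 1) ∣ p := by
  rw [X_pow_dvd_iff] at h ⊢
  rintro (_ | d) hd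
  · exact h₀
  · have := h d (by omega)
    rw [coeff_derivative, mul_eq_zero] at this
    exact this.resolve_right (by norm_cast)

lemma X_pow_succ_dvd_logTrunc_comp_sub [CharZero K] (n M : ℕ) :
    X ^ (M + 1) ∣ (logTrunc K M).comp ((1 + X) ^ n - 1) - (n : K[X]) * logTrunc K M := by
  set g : K[X] := (1 + X) ^ n - 1
  have hXg : X ∣ g := by
    have := sub_dvd_pow_sub_pow (1 + X : K[X]) 1 n
    rwa [add_sub_cancel_left, one_pow] at this
  have hdg : (1 + X) * derivative g = (n : K[X]) * (1 + g) := by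
    rcases n with _ | n
    · simp [g]
    · simp only [g, derivative_sub, derivative_pow, derivative_add, derivative_one, derivative_X]
      rw [Nat.add_sub_cancel, C_eq_natCast]
      ring
  have hgeom (q : K[X]) : (1 + q) * ∑ k ∈ range M, (-q) ^ k = 1 - (-q) ^ M := by
    rw [mul_comm, ← geom_sum_mul_neg, sub_neg_eq_add, add_comm]
  have hcomp : (∑ k ∈ range M, (-X : K[X]) ^ k).comp g = ∑ k ∈ range M, (-g) ^ k := by
    simp [sum_comp]
  apply X_pow_succ_dvd_of_X_pow_dvd_derivative
  · simp [logTrunc, g, coeff_zero_eq_eval_zero, eval_finsetSum]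
  · have hderiv : (1 + X) * derivative ((logTrunc K M).comp g - (n : K[X]) * logTrunc K M) =
        (n : K[X]) * ((-X) ^ M - (-g) ^ M) := by
      rw [derivative_sub, derivative_comp, derivative_mul, derivative_natCast,
        derivative_logTrunc, hcomp]
      linear_combination (∑ k ∈ range M, (-g) ^ k) * hdg + n * hgeom g - n * hgeom X
    have hcop : IsCoprime (X ^ M : K[X]) (1 + X) :=
      (show IsCoprime (X : K[X]) (1 + X) from ⟨-1, 1, by ring⟩).pow_left
    refine hcop.dvd_of_dvd_mul_left (hderiv ▸ dvd_mul_of_dvd_right ?_ _)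
    rw [neg_pow (X : K[X]), neg_pow g, ← mul_sub]
    exact (dvd_sub dvd_rfl (pow_dvd_pow_of_dvd hXg M)).mul_left _

lemma eval_logTrunc_sub_eval_neg (N : ℕ) (x : K) :
    (logTrunc K (2 * N)).eval x - (logTrunc K (2 * N)).eval (-x) =
      2 * x * ∑ k ∈ range N, (x ^ 2) ^ k / (2 * k + 1) := by
  induction N with
  | zero => simp [logTrunc]
  | succ N ih =>
    have hodd : (-x) ^ (2 * N + 1) = -x ^ (2 * N + 1) := Odd.neg_pow ⟨N, rfl⟩ x
    have heven : (-x) ^ (2 * N + 1 + 1) = x ^ (2 * N + 1 + 1) := Even.neg_pow ⟨N + 1, by ring⟩ x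
    rw [show 2 * (N + 1) = 2 * N + 1 + 1 by ring, logTrunc, sum_range_succ, sum_range_succ,
      ← logTrunc]
    simp only [eval_add, eval_mul, eval_C, eval_pow, eval_X, hodd, heven,
      (Even.neg_one_pow ⟨N, two_mul N⟩ : (-1 : K) ^ (2 * N) = 1)]
    rw [sum_range_succ]
    push_cast
    linear_combination ih

section Ultrametric

variable {E : Type*} [NormedField E] [IsUltrametricDist E]

lemma norm_eval_le_of_X_pow_dvd {f : E[X]} {x : E} {m : ℕ} {C : ℝ} (hx : ‖x‖ ≤ 1)
    (hf : X ^ m ∣ f) (hC : ∀ i, ‖f.coeff i‖ ≤ C) : ‖f.eval x‖ ≤ C * ‖x‖ ^ m := by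
  have hC₀ : 0 ≤ C := (norm_nonneg _).trans (hC 0)
  rw [eval_eq_sum_range]
  refine IsUltrametricDist.norm_sum_le_of_forall_le_of_nonneg (by positivity) fun i _ => ?_
  by_cases hi : i < m
  · rw [X_pow_dvd_iff.mp hf i hi, zero_mul, norm_zero]
    positivity
  · rw [norm_mul, norm_pow]
    exact mul_le_mul (hC i) (pow_le_pow_of_le_one (norm_nonneg x) hx (not_lt.mp hi))
      (by positivity) hC₀

end Ultrametric

lemma norm_coeff_logTrunc_comp_le (p : ℕ) [Fact p.Prime] {E : Type*} [NormedField E]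
    [NormedAlgebra ℚ_[p] E] [IsUltrametricDist E] (M : ℕ) (q : ℤ[X]) (i : ℕ) :
    ‖((logTrunc E M).comp (q.map (Int.castRingHom E))).coeff i‖ ≤ M := by
  simp only [logTrunc, sum_comp, mul_comp, C_comp, X_pow_comp, ← Polynomial.map_pow,
    finsetSum_coeff, coeff_C_mul, coeff_map, eq_intCast]
  refine IsUltrametricDist.norm_sum_le_of_forall_le_of_nonneg (Nat.cast_nonneg M) fun k hk => ?_
  have hk : (k + 1 : ℝ) ≤ M := by exact_mod_cast mem_range.mp hk
  have hinv : ‖((k + 1 : ℕ) : E)‖⁻¹ ≤ k + 1 := by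
    exact_mod_cast inv_norm_natCast_le p k.succ_ne_zero
  rw [norm_mul, norm_div, norm_pow, norm_neg, norm_one, one_pow, one_div]
  push_cast at hinv
  calc ‖(k : E) + 1‖⁻¹ * ‖((q ^ (k + 1)).coeff i : E)‖ ≤ (k + 1) * 1 :=
        mul_le_mul hinv (IsUltrametricDist.norm_intCast_le_one E _) (norm_nonneg _)
          (by positivity)
    _ ≤ M := by rwa [mul_one]

lemma norm_mul_eval_logTrunc_sub_le (p : ℕ) [Fact p.Prime] {E : Type*} [NormedField E]
    [NormedAlgebra ℚ_[p] E] [IsUltrametricDist E] {n : ℕ} (M : ℕ) {x : E} (hx : ‖x‖ ≤ 1)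
    (h : (1 + x) ^ n = (1 - x) ^ n) :
    ‖(n : E) * ((logTrunc E M).eval x - (logTrunc E M).eval (-x))‖ ≤ M * ‖x‖ ^ (M + 1) := by
  have := charZero_of_injective_algebraMap (algebraMap ℚ_[p] E).injective
  set F := (logTrunc E M).comp ((1 + X) ^ n - 1) - (n : E[X]) * logTrunc E M
  have hcoeff (i : ℕ) : ‖F.coeff i‖ ≤ M := by
    have h₁ := norm_coeff_logTrunc_comp_le p (E := E) M ((1 + X) ^ n - 1) i
    have h₂ := norm_coeff_logTrunc_comp_le p (E := E) M X i
    simp only [Polynomial.map_sub, Polynomial.map_pow, Polynomial.map_add, Polynomial.map_one,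
      Polynomial.map_X, comp_X] at h₁ h₂
    rw [coeff_sub, coeff_natCast_mul, sub_eq_add_neg]
    refine (IsUltrametricDist.norm_add_le_max _ _).trans (max_le h₁ ?_)
    rw [norm_neg, norm_mul]
    exact (mul_le_of_le_one_left (norm_nonneg _)
      (IsUltrametricDist.norm_natCast_le_one E n)).trans h₂
  have hF (y : E) (hy : ‖y‖ ≤ 1) : ‖F.eval y‖ ≤ M * ‖y‖ ^ (M + 1) :=
    norm_eval_le_of_X_pow_dvd hy (X_pow_succ_dvd_logTrunc_comp_sub n M) hcoeff
  have hdiff : F.eval (-x) - F.eval x =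
      (n : E) * ((logTrunc E M).eval x - (logTrunc E M).eval (-x)) := by
    simp only [F, eval_sub, eval_comp, eval_pow, eval_add, eval_one, eval_X, eval_mul,
      eval_natCast, ← sub_eq_add_neg, h]
    ring
  rw [← hdiff, sub_eq_add_neg]
  refine (IsUltrametricDist.norm_add_le_max _ _).trans (max_le ?_ ?_)
  · simpa using hF (-x) (by rwa [norm_neg])
  · simpa using hF x hx

end Polynomial

lemma norm_sum_neg_three_pow_div_le (N : ℕ) :
    ‖∑ k ∈ range N, (-3 : ℚ_[3]) ^ k / ((2 * k + 1 : ℕ) : ℚ_[3])‖ ≤ 12 * N * 3⁻¹ ^ N := by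
  set s := ∑ k ∈ range N, (-3 : ℚ_[3]) ^ k / ((2 * k + 1 : ℕ) : ℚ_[3])
  obtain ⟨π, hπ⟩ := IsAlgClosed.exists_pow_nat_eq (-3 : PadicAlgCl 3) two_pos
  have hnorm : ‖π‖ ^ 2 = 3⁻¹ := by
    rw [← norm_pow, hπ, norm_neg, ← map_ofNat (algebraMap ℚ_[3] (PadicAlgCl 3)),
      norm_algebraMap']
    exact_mod_cast Padic.norm_p (p := 3)
  have hπ₀ : 0 < ‖π‖ := norm_pos_iff.mpr (by rintro rfl; norm_num at hπ)
  have hπ₁ : ‖π‖ ≤ 1 := by nlinarith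
  have hcube : (1 + π) ^ 3 = (1 - π) ^ 3 := by linear_combination 2 * π * hπ
  have hs : ∑ k ∈ range N, (π ^ 2) ^ k / (2 * (k : PadicAlgCl 3) + 1) =
      algebraMap ℚ_[3] (PadicAlgCl 3) s := by
    simp only [s, map_sum, map_div₀, map_pow, map_neg, map_ofNat, map_natCast, hπ]
    push_cast
    rfl
  have hlog := norm_mul_eval_logTrunc_sub_le 3 (2 * N) hπ₁ hcube
  rw [eval_logTrunc_sub_eval_neg, hs] at hlog
  have h6 : ‖(6 : PadicAlgCl 3)‖⁻¹ ≤ 6 := by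
    exact_mod_cast inv_norm_natCast_le 3 (n := 6) (by norm_num)
  have hs6 : ‖(6 : PadicAlgCl 3)‖ * ‖s‖ ≤ 2 * N * 3⁻¹ ^ N := by
    refine le_of_mul_le_mul_right ?_ hπ₀
    calc ‖(6 : PadicAlgCl 3)‖ * ‖s‖ * ‖π‖
        = ‖((3 : ℕ) : PadicAlgCl 3) * (2 * π * algebraMap ℚ_[3] (PadicAlgCl 3) s)‖ := by
          rw [← norm_algebraMap' (PadicAlgCl 3) s, ← norm_mul, ← norm_mul]
          congr 1
          push_cast
          ring
      _ ≤ ((2 * N : ℕ) : ℝ) * ‖π‖ ^ (2 * N + 1) := hlog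
      _ = 2 * N * 3⁻¹ ^ N * ‖π‖ := by rw [pow_succ, pow_mul, hnorm]; push_cast; ring
  calc ‖s‖ = ‖(6 : PadicAlgCl 3)‖⁻¹ * (‖(6 : PadicAlgCl 3)‖ * ‖s‖) := by
        field_simp
    _ ≤ 6 * (2 * N * 3⁻¹ ^ N) := mul_le_mul h6 hs6 (by positivity) (by norm_num)
    _ = 12 * N * 3⁻¹ ^ N := by ring

/-- The series `∑_{k=0}^∞ (−3)^k/(2k+1)` converges to `0` in `ℚ₃`. -/
theorem stmt_17 :
    Filter.Tendsto
      (fun N : ℕ => ∑ k ∈ Finset.range N, ((-3 : ℚ_[3]) ^ k / ((2 * k + 1 : ℕ) : ℚ_[3])))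
      Filter.atTop (nhds 0) := by
  rw [tendsto_zero_iff_norm_tendsto_zero]
  refine squeeze_zero (fun _ => norm_nonneg _) norm_sum_neg_three_pow_div_le ?_
  simpa [mul_assoc] using
    (tendsto_self_mul_const_pow_of_lt_one (by norm_num : (0 : ℝ) ≤ 3⁻¹) (by norm_num)).const_mul 12
end

section
/- For every integer a ≥ 1: ∑_{k=0}^{3^a − 1} C(2(3^a) − 3, k) ≡ 1 (mod 3), where the sum is the partial sum of the binomial coefficients of 2·3^a − 3. (One has ∑_{k=0}^{3^a−1} C(2·3^a−3,k) = 2^{2·3^a−4} + (1/2)·C(2·3^a−3, 3^a−2) + C(2·3^a−3, 3^a−1).) -/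
/-!
Write `3 ^ a = n + 2`, so the binomial row is that of the odd number `2n + 1` and the sum
runs one term past the middle. The first half of an odd row sums to `4 ^ n ≡ 1`, and the
extra term `C(2n + 1, n + 1)` vanishes mod 3, since `3 ∣ 2n + 1` but `3 ∤ n + 1`.
-/

theorem Nat.sum_range_succ_succ_choose_odd (n : ℕ) :
    ∑ k ∈ Finset.range (n + 2), (2 * n + 1).choose k = 4 ^ n + (2 * n + 1).choose (n + 1) := by
  rw [Finset.sum_range_succ, Nat.sum_range_choose_halfway]

-- From `k * C(m, k) = m * C(m - 1, k - 1)`.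
theorem Nat.Prime.dvd_choose_of_dvd_of_not_dvd {p m k : ℕ} (hp : p.Prime) (hm : p ∣ m)
    (hk : ¬ p ∣ k) : p ∣ m.choose k := by
  obtain _ | j := k
  · exact absurd (dvd_zero p) hk
  obtain _ | i := m
  · simp
  have hmul : p ∣ (i + 1).choose (j + 1) * (j + 1) :=
    Nat.add_one_mul_choose_eq i j ▸ hm.mul_right _
  exact (hp.dvd_mul.mp hmul).resolve_right hk

theorem stmt_18 (a : ℕ) (ha : 1 ≤ a) :
    (∑ k ∈ Finset.range (3 ^ a), Nat.choose (2 * 3 ^ a - 3) k) ≡ 1 [MOD 3] := by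
  have h3 : 3 ∣ 3 ^ a := dvd_pow_self 3 (by omega)
  have h3le : 3 ≤ 3 ^ a := Nat.le_of_dvd (by positivity) h3
  obtain ⟨n, hn⟩ : ∃ n, 3 ^ a = n + 2 := ⟨3 ^ a - 2, by omega⟩
  rw [show 2 * 3 ^ a - 3 = 2 * n + 1 by omega, hn, Nat.sum_range_succ_succ_choose_odd]
  have hpow : 4 ^ n ≡ 1 [MOD 3] := by
    simpa using Nat.ModEq.pow n (show 4 ≡ 1 [MOD 3] by decide)
  have hmid : 3 ∣ (2 * n + 1).choose (n + 1) :=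
    Nat.prime_three.dvd_choose_of_dvd_of_not_dvd (by omega) (by omega)
  simpa using hpow.add (Nat.modEq_zero_iff_dvd.mpr hmid)
end
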